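/- Let A and B be unital C*-algebras and T₀ : A → B a real-linear, unital, *-preserving bijection satisfying T₀(a b a) = T₀(a) T₀(b) T₀(a) for all a, b ∈ A. Then the element u = T₀(i·1_A) is unitary in B, satisfies u* = -u and u² = -1_B, and -i·u is a self-adjoint element whose square is 1_B (a symmetry). -/
import Mathlib

theorem stmtN
    {A B : Type*}
    [NormedRing A] [StarRing A] [CStarRing A] [NormedAlgebra ℂ A]
    [CompleteSpace A] [StarModule ℂ A]
    [NormedRing B] [StarRing B] [CStarRing B] [NormedAlgebra ℂ B]
    [CompleteSpace B] [StarModule ℂ B]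
    (T₀ : A →ₗ[ℝ] B)
    (hbij : Function.Bijective T₀)
    (hone : T₀ 1 = 1)
    (hstar : ∀ x : A, T₀ (star x) = star (T₀ x))
    (haba : ∀ a b : A, T₀ (a * b * a) = T₀ a * T₀ b * T₀ a) :
    T₀ ((Complex.I : ℂ) • (1 : A)) ∈ unitary B ∧
      star (T₀ ((Complex.I : ℂ) • (1 : A))) = -T₀ ((Complex.I : ℂ) • (1 : A)) ∧
      T₀ ((Complex.I : ℂ) • (1 : A)) * T₀ ((Complex.I : ℂ) • (1 : A)) = -1 ∧
      star ((-Complex.I : ℂ) • T₀ ((Complex.I : ℂ) • (1 : A)))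
        = (-Complex.I : ℂ) • T₀ ((Complex.I : ℂ) • (1 : A)) ∧
      ((-Complex.I : ℂ) • T₀ ((Complex.I : ℂ) • (1 : A))) *
          ((-Complex.I : ℂ) • T₀ ((Complex.I : ℂ) • (1 : A))) = 1 := by
  set a : A := (Complex.I : ℂ) • (1 : A) with ha
  set u : B := T₀ a with hu
  have hstar_a : star a = -a := by
    simp [ha, star_smul, Complex.conj_I, neg_smul]
  have hstar_u : star u = -u := by
    rw [hu, ← hstar, hstar_a, map_neg]
  have hsq_a : a * a = -1 := by
    simp [ha, smul_mul_smul_comm, smul_smul, Complex.I_mul_I, neg_smul]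
  have hsq : u * u = -1 := by
    have := haba a 1
    rw [mul_one, hsq_a, hone, mul_one] at this
    rw [hu, ← this, map_neg, hone]
  have hunit : u ∈ unitary B := by
    constructor
    · rw [hstar_u, neg_mul, hsq, neg_neg]
    · rw [hstar_u, mul_neg, hsq, neg_neg]
  refine ⟨hunit, hstar_u, hsq, ?_, ?_⟩
  · rw [star_smul, hstar_u, smul_neg]
    simp [Complex.conj_I]
  · rw [smul_mul_smul_comm, hsq]
    simp [Complex.I_mul_I]
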